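/- Let p be an odd prime and let G be a finite p-group of nilpotency class two with G' = Z(G). Let Δ be a symmetric bilinear form on G with associated circle operation x ∘ y = x·y·Δ(x, y). Then there exists a bijection θ: G → G with θ(x·y) = θ(x) ∘ θ(y) for all x, y ∈ G; that is, G and (G, ∘) are isomorphic. -/

import Mathlib

/-- The commutator `[x, y] = x⁻¹ * y⁻¹ * x * y` in the paper's convention. -/
def pcomm {G : Type*} [Group G] (x y : G) : G := x⁻¹ * y⁻¹ * x * y

open scoped commutatorElement

theorem pcomm_mem_commutator {G : Type*} [Group G] (x y : G) :
    pcomm x y ∈ commutator G := by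
  have h : pcomm x y = ⁅x⁻¹, y⁻¹⁆ := by
    simp [pcomm, commutatorElement_def, mul_assoc]
  rw [h, commutator_def]
  exact Subgroup.commutator_mem_commutator (Subgroup.mem_top _) (Subgroup.mem_top _)

/-- A bilinear form on a group `G` of class two with `G' = Z(G)`: a map
`Δ : G/G' × G/G' → G'` which is multiplicative in each variable. -/
def IsBilinearForm {G : Type*} [Group G] (Δ : G → G → G) : Prop :=
  (∀ x y : G, Δ x y ∈ commutator G) ∧
  (∀ x y w : G, w ∈ commutator G → Δ (x * w) y = Δ x y) ∧
  (∀ x y w : G, w ∈ commutator G → Δ x (y * w) = Δ x y) ∧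
  (∀ x₁ x₂ y : G, Δ (x₁ * x₂) y = Δ x₁ y * Δ x₂ y) ∧
  (∀ x y₁ y₂ : G, Δ x (y₁ * y₂) = Δ x y₁ * Δ x y₂)

/-- The circle operation `x ∘ y = x·y·Δ(x, y)` associated to a bilinear form `Δ`. -/
def circ {G : Type*} [Group G] (Δ : G → G → G) (x y : G) : G := x * y * Δ x y

/-- The circle inverse `x^{⊖1} = x⁻¹·Δ(x, x)`. -/
def oinv {G : Type*} [Group G] (Δ : G → G → G) (x : G) : G := x⁻¹ * Δ x x

/-- The circle commutator `[x, y]_∘ = x^{⊖1} ∘ y^{⊖1} ∘ x ∘ y`. -/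
def ocomm {G : Type*} [Group G] (Δ : G → G → G) (x y : G) : G :=
  circ Δ (circ Δ (circ Δ (oinv Δ x) (oinv Δ y)) x) y

/-!
Since `G` has odd order, every `g ∈ G` has the square root `g ^ m` with `m = (|G| + 1) / 2`.
By bilinearity and symmetry `Δ(xy, xy) = Δ(x, x) Δ(y, y) Δ(x, y)²`, so taking square roots in the
central subgroup `G'` gives `√Δ(xy, xy) = √Δ(x, x) √Δ(y, y) Δ(x, y)`. Hence `θ(x) = x √Δ(x, x)`
satisfies `θ(xy) = θ(x) θ(y) Δ(x, y) = θ(x) ∘ θ(y)`, because `Δ` does not see the factors from `G'`.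
-/

open Function

theorem IsPGroup.odd_natCard {p : ℕ} (hodd : Odd p) {G : Type*} [Group G] [Finite G]
    (hpG : IsPGroup p G) : Odd (Nat.card G) := by
  rw [Nat.odd_iff, ← Nat.two_dvd_ne_zero]
  intro h2
  obtain ⟨g, hg⟩ := exists_prime_orderOf_dvd_card' 2 h2
  obtain ⟨k, hk⟩ := hpG g
  have : 2 ∣ p ^ k := hg ▸ orderOf_dvd_of_pow_eq_one hk
  exact (Nat.not_even_iff_odd.mpr hodd.pow) (even_iff_two_dvd.mpr this)

theorem pow_two_mul_half_natCard_succ {G : Type*} [Group G] (hodd : Odd (Nat.card G)) (g : G) :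
    g ^ (2 * ((Nat.card G + 1) / 2)) = g := by
  have : 2 * ((Nat.card G + 1) / 2) = Nat.card G + 1 := by
    obtain ⟨t, ht⟩ := hodd
    omega
  rw [this, pow_succ, pow_card_eq_one', one_mul]

namespace IsBilinearForm

variable {G : Type*} [Group G] {Δ : G → G → G}

theorem apply_mul_mem_mul_mem (hΔ : IsBilinearForm Δ) {w w' : G} (hw : w ∈ commutator G)
    (hw' : w' ∈ commutator G) (x y : G) : Δ (x * w) (y * w') = Δ x y := by
  rw [hΔ.2.1 _ _ _ hw, hΔ.2.2.1 _ _ _ hw']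

theorem apply_mul_mul_self (hΔ : IsBilinearForm Δ) (hsym : ∀ x y : G, Δ y x = Δ x y)
    (hcent : ∀ x y : G, Δ x y ∈ Subgroup.center G) (x y : G) :
    Δ (x * y) (x * y) = Δ x x * Δ y y * Δ x y ^ 2 := by
  have h : Commute (Δ x y) (Δ y y) := Subgroup.mem_center_iff.mp (hcent y y) (Δ x y)
  rw [hΔ.2.2.2.1, hΔ.2.2.2.2, hΔ.2.2.2.2, hsym x y, pow_two]
  simp only [mul_assoc, h.eq, h.left_comm]

end IsBilinearForm

section DiagTwist

variable {G : Type*} [Group G] {Δ : G → G → G}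

def diagTwist (Δ : G → G → G) (m : ℕ) (x : G) : G := x * Δ x x ^ m

theorem apply_diagTwist_diagTwist (hΔ : IsBilinearForm Δ) (m : ℕ) (x y : G) :
    Δ (diagTwist Δ m x) (diagTwist Δ m y) = Δ x y :=
  hΔ.apply_mul_mem_mul_mem (pow_mem (hΔ.1 x x) m) (pow_mem (hΔ.1 y y) m) x y

theorem diagTwist_bijective (hΔ : IsBilinearForm Δ) (m : ℕ) : Bijective (diagTwist Δ m) := by
  refine bijective_iff_has_inverse.mpr ⟨fun z => z * (Δ z z ^ m)⁻¹, fun x => ?_, fun z => ?_⟩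
  · dsimp only
    rw [apply_diagTwist_diagTwist hΔ, diagTwist, mul_inv_cancel_right]
  · have hinv : (Δ z z ^ m)⁻¹ ∈ commutator G := inv_mem (pow_mem (hΔ.1 z z) m)
    simp only [diagTwist, hΔ.apply_mul_mem_mul_mem hinv hinv, inv_mul_cancel_right]

theorem diagTwist_mul (hΔ : IsBilinearForm Δ) (hsym : ∀ x y : G, Δ y x = Δ x y)
    (hcent : ∀ x y : G, Δ x y ∈ Subgroup.center G) {m : ℕ}
    (hm : ∀ x y : G, Δ x y ^ (2 * m) = Δ x y) (x y : G) :
    diagTwist Δ m (x * y) = circ Δ (diagTwist Δ m x) (diagTwist Δ m y) := by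
  have hcomm : ∀ a b g : G, Commute (Δ a b) g := fun a b g =>
    (Subgroup.mem_center_iff.mp (hcent a b) g).symm
  have hsqrt : Δ (x * y) (x * y) ^ m = Δ x x ^ m * Δ y y ^ m * Δ x y := by
    rw [hΔ.apply_mul_mul_self hsym hcent, ((hcomm x x _).mul_left (hcomm y y _)).mul_pow,
      (hcomm x x _).mul_pow, ← pow_mul, hm]
  rw [circ, apply_diagTwist_diagTwist hΔ, diagTwist, diagTwist, diagTwist, hsqrt]
  simp only [mul_assoc, ((hcomm x x y).pow_left m).left_comm]

end DiagTwist

theorem stmt_11_general {p : ℕ} (hodd : Odd p)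
    {G : Type*} [Group G] [Fintype G] (hpG : IsPGroup p G)
    (hGZ : commutator G = Subgroup.center G)
    (Δ : G → G → G) (hΔ : IsBilinearForm Δ)
    (hsym : ∀ x y : G, Δ y x = Δ x y) :
    ∃ θ : G → G, Function.Bijective θ ∧
      ∀ x y : G, θ (x * y) = circ Δ (θ x) (θ y) := by
  have hcent : ∀ x y : G, Δ x y ∈ Subgroup.center G := fun x y => hGZ ▸ hΔ.1 x y
  have hsqrt : ∀ x y : G, Δ x y ^ (2 * ((Nat.card G + 1) / 2)) = Δ x y := fun x y =>
    pow_two_mul_half_natCard_succ (hpG.odd_natCard hodd) (Δ x y)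
  exact ⟨_, diagTwist_bijective hΔ _, diagTwist_mul hΔ hsym hcent hsqrt⟩

/-- if `Δ` is a symmetric bilinear form on `G`, then `G` and the circle
group `(G, ∘)` are isomorphic. -/
theorem stmt_11 {p : ℕ} (hp : p.Prime) (hodd : Odd p)
    {G : Type*} [Group G] [Fintype G] (hpG : IsPGroup p G)
    (hc2 : (⊤ : Subgroup G).lowerCentralSeries 2 = ⊥) (hc1 : (⊤ : Subgroup G).lowerCentralSeries 1 ≠ ⊥)
    (hGZ : commutator G = Subgroup.center G)
    (Δ : G → G → G) (hΔ : IsBilinearForm Δ)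
    (hsym : ∀ x y : G, Δ y x = Δ x y) :
    ∃ θ : G → G, Function.Bijective θ ∧
      ∀ x y : G, θ (x * y) = circ Δ (θ x) (θ y) :=
  stmt_11_general hodd hpG hGZ Δ hΔ hsym
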